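/- Let n ≥ 17, let y_0,…,y_{29} be nonnegative reals with Σ_{k=0}^{29} y_k = 1, set z_k = y_k^{1/(2n)}, and define f : [0,29] → ℝ by f(x) = max_{0 ≤ k ≤ 29} z_k·|x − k|. Then there exists an integer c with 0 ≤ c ≤ 27 such that every integer a ∈ {0,…,29} with a ∉ {c, c+1, c+2} satisfies both f(a) ≥ 1.8 and f(a) ≥ min_{0 ≤ k ≤ 29} f(k) + 1/30. -/
import Mathlib


/-- `f(x) = max_{0 ≤ k ≤ 29} y_k^{1/(2n)} · |x - k|`, the pointwise maximum of the 30
functions `f_k(x) = z_k · |x - k|` with `z_k = y_k^{1/(2n)}`. -/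
noncomputable def fmax (n : ℕ) (y : Fin 30 → ℝ) (x : ℝ) : ℝ :=
  Finset.univ.sup' Finset.univ_nonempty
    (fun k : Fin 30 => y k ^ ((1 : ℝ) / (2 * n)) * |x - ((k : ℕ) : ℝ)|)

/-- for `n ≥ 17` and any probability vector `y` on `{0,…,29}`, there are
three consecutive integers `c, c+1, c+2` (with `c ≤ 27`) such that every other integer
`a ∈ {0,…,29}` satisfies `f(a) ≥ 1.8` and `f(a) ≥ min_{0 ≤ k ≤ 29} f(k) + 1/30`. -/
theorem stmt9 (n : ℕ) (hn : 17 ≤ n) (y : Fin 30 → ℝ)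
    (hy : ∀ k, 0 ≤ y k) (hsum : (∑ k, y k) = 1) :
    ∃ c : ℕ, c ≤ 27 ∧
      ∀ a : ℕ, a ≤ 29 → a ≠ c → a ≠ c + 1 → a ≠ c + 2 →
        fmax n y (a : ℝ) ≥ 1.8 ∧
        fmax n y (a : ℝ) ≥
          (Finset.univ.inf' Finset.univ_nonempty
            (fun k : Fin 30 => fmax n y ((k : ℕ) : ℝ))) + 1 / 30 := by
  classical
  set Z : Fin 30 → ℝ := fun k => y k ^ ((1:ℝ)/(2*(n:ℝ))) with hZdef
  have hZ0 : ∀ k, 0 ≤ Z k := fun k => Real.rpow_nonneg (hy k) _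
  have hle : ∀ (k : Fin 30) (x : ℝ), Z k * |x - (k.val:ℝ)| ≤ fmax n y x := by
    intro k x
    exact Finset.le_sup'
      (fun k : Fin 30 => y k ^ ((1:ℝ)/(2*(n:ℝ))) * |x - ((k:ℕ):ℝ)|) (Finset.mem_univ k)
  have hex : ∀ x : ℝ, ∃ k : Fin 30, fmax n y x = Z k * |x - (k.val:ℝ)| := by
    intro x
    obtain ⟨k, -, hk⟩ := Finset.exists_mem_eq_sup' (Finset.univ_nonempty)
      (fun k : Fin 30 => y k ^ ((1:ℝ)/(2*(n:ℝ))) * |x - ((k:ℕ):ℝ)|)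
    exact ⟨k, hk⟩
  obtain ⟨m, hm⟩ : ∃ m : Fin 30, (1:ℝ)/30 ≤ y m := by
    by_contra h
    push_neg at h
    have hlt : ∑ k, y k < ∑ _k : Fin 30, (1:ℝ)/30 :=
      Finset.sum_lt_sum_of_nonempty Finset.univ_nonempty (fun i _ => h i)
    rw [hsum] at hlt
    simp [Finset.sum_const, Finset.card_univ] at hlt

  have hzm : (0.9:ℝ) ≤ Z m := by
    have e1 : ((1:ℝ)/30) ^ ((1:ℝ)/(2*(n:ℝ))) ≤ Z m :=
      Real.rpow_le_rpow (by norm_num) hm (by positivity)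
    have hexp : (1:ℝ)/(2*(n:ℝ)) ≤ 1/34 := by
      apply one_div_le_one_div_of_le (by norm_num)
      exact_mod_cast (by omega : 34 ≤ 2 * n)
    have e2 : ((1:ℝ)/30) ^ ((1:ℝ)/34) ≤ ((1:ℝ)/30) ^ ((1:ℝ)/(2*(n:ℝ))) :=
      Real.rpow_le_rpow_of_exponent_ge (by norm_num) (by norm_num) hexp
    have e3 : (0.9:ℝ) ≤ ((1:ℝ)/30) ^ ((1:ℝ)/34) := by
      have h34 : (0.9:ℝ) ^ ((34:ℕ):ℝ) ≤ 1/30 := by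
        rw [Real.rpow_natCast]; norm_num
      calc (0.9:ℝ) = ((0.9:ℝ) ^ ((34:ℕ):ℝ)) ^ ((1:ℝ)/34) := by
            rw [← Real.rpow_mul (by norm_num)]
            norm_num
        _ ≤ _ := Real.rpow_le_rpow (Real.rpow_nonneg (by norm_num) _) h34 (by norm_num)
    linarith
  set μ := Finset.univ.inf' Finset.univ_nonempty
      (fun k : Fin 30 => fmax n y ((k:ℕ):ℝ)) with hμdef
  have hμle' : ∀ a : ℕ, a ≤ 29 → μ ≤ fmax n y (a:ℝ) := by
    intro a ha
    have h : μ ≤ fmax n y (((⟨a, by omega⟩ : Fin 30) : ℕ) : ℝ) :=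
      Finset.inf'_le _ (Finset.mem_univ _)
    exact h
  by_cases hcase : μ ≤ 53/30
  · -- window around m
    refine ⟨min (m.val - 1) 27, min_le_right _ _, ?_⟩
    intro a ha h1 h2 h3
    have hwin : a + 2 ≤ m.val ∨ m.val + 2 ≤ a := by
      have := m.isLt
      omega
    have habs : (2:ℝ) ≤ |(a:ℝ) - (m.val:ℝ)| := by
      rcases hwin with h | h
      · have h' : (a:ℝ) + 2 ≤ (m.val:ℝ) := by exact_mod_cast h
        rw [abs_sub_comm, abs_of_nonneg (by linarith)]
        linarith
      · have h' : (m.val:ℝ) + 2 ≤ (a:ℝ) := by exact_mod_cast h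
        rw [abs_of_nonneg (by linarith)]
        linarith
    have hfa : (1.8:ℝ) ≤ fmax n y (a:ℝ) := by
      have h5 := hle m (a:ℝ)
      have h6 : (0.9:ℝ) * 2 ≤ Z m * |(a:ℝ) - (m.val:ℝ)| :=
        mul_le_mul hzm habs (by norm_num) (le_trans (by norm_num) hzm)
      linarith
    exact ⟨hfa, by linarith⟩
  · push_neg at hcase
    obtain ⟨m', -, hm'⟩ := Finset.exists_mem_eq_inf' (Finset.univ_nonempty)
      (fun k : Fin 30 => fmax n y ((k:ℕ):ℝ))
    have hμm' : μ = fmax n y ((m'.val:ℕ):ℝ) := hm'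
    refine ⟨min (m'.val - 1) 27, min_le_right _ _, ?_⟩
    intro a ha h1 h2 h3
    have hwin : a + 2 ≤ m'.val ∨ m'.val + 2 ≤ a := by
      have := m'.isLt
      omega
    have ha0 : (0:ℝ) ≤ (a:ℝ) := Nat.cast_nonneg a
    have hm29 : m'.val ≤ 29 := by have := m'.isLt; omega
    rcases hwin with hL | hR
    · -- a is left of m'; b = a+1
      have hL' : (a:ℝ) + 2 ≤ (m'.val:ℝ) := by exact_mod_cast hL
      have hb29 : a + 1 ≤ 29 := by omega
      have hfb : μ ≤ fmax n y ((a:ℝ)+1) := by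
        have h := hμle' (a+1) hb29
        push_cast at h
        exact h
      obtain ⟨k', hk'⟩ := hex ((a:ℝ)+1)
      have hk29 : (k'.val:ℝ) ≤ 29 := by
        exact_mod_cast (by have := k'.isLt; omega : k'.val ≤ 29)
      have hk'ge : (a:ℝ) + 1 ≤ (k'.val:ℝ) := by
        by_contra hgt
        push_neg at hgt
        have e1 : fmax n y ((a:ℝ)+1) = Z k' * (((a:ℝ)+1) - (k'.val:ℝ)) := by
          rw [hk', abs_of_nonneg (by linarith)]
        have e2 : Z k' * ((m'.val:ℝ) - (k'.val:ℝ)) ≤ fmax n y ((m'.val:ℝ)) := by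
          have h := hle k' ((m'.val:ℝ))
          rwa [abs_of_nonneg (by linarith)] at h
        rw [← hμm'] at e2
        have hfb' : μ ≤ Z k' * (((a:ℝ)+1) - (k'.val:ℝ)) := by rw [← e1]; exact hfb
        have hid : Z k' * ((m'.val:ℝ) - ((a:ℝ)+1))
            = Z k' * ((m'.val:ℝ) - (k'.val:ℝ)) - Z k' * (((a:ℝ)+1) - (k'.val:ℝ)) := by ring
        have hq : Z k' * ((m'.val:ℝ) - ((a:ℝ)+1)) ≤ 0 := by linarith
        have hd : (1:ℝ) ≤ (m'.val:ℝ) - ((a:ℝ)+1) := by linarith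
        have h7 := mul_le_mul_of_nonneg_left hd (hZ0 k')
        have hZeq : Z k' = 0 := le_antisymm (by linarith) (hZ0 k')
        rw [hZeq, zero_mul] at e1
        linarith
      have e1 : fmax n y ((a:ℝ)+1) = Z k' * ((k'.val:ℝ) - ((a:ℝ)+1)) := by
        rw [hk', abs_sub_comm, abs_of_nonneg (by linarith)]
      have hbound : fmax n y ((a:ℝ)+1) ≤ Z k' * 29 := by
        rw [e1]
        exact mul_le_mul_of_nonneg_left (by linarith) (hZ0 k')
      have hZbig : (53:ℝ)/870 ≤ Z k' := by linarith
      have e3 : Z k' * ((k'.val:ℝ) - (a:ℝ)) ≤ fmax n y (a:ℝ) := by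
        have h := hle k' (a:ℝ)
        rwa [abs_sub_comm, abs_of_nonneg (by linarith)] at h
      have hid : Z k' * ((k'.val:ℝ) - (a:ℝ))
          = Z k' * ((k'.val:ℝ) - ((a:ℝ)+1)) + Z k' := by ring
      constructor
      · show (1.8:ℝ) ≤ fmax n y (a:ℝ)
        linarith
      · show μ + 1/30 ≤ fmax n y (a:ℝ)
        linarith
    · -- a is right of m'; b = a-1
      have hR' : (m'.val:ℝ) + 2 ≤ (a:ℝ) := by exact_mod_cast hR
      have hb29 : a - 1 ≤ 29 := by omega
      have hfb : μ ≤ fmax n y ((a:ℝ)-1) := by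
        have h := hμle' (a-1) hb29
        rw [Nat.cast_sub (by omega : 1 ≤ a)] at h
        exact_mod_cast h
      obtain ⟨k', hk'⟩ := hex ((a:ℝ)-1)
      have hk29 : (k'.val:ℝ) ≤ 29 := by
        exact_mod_cast (by have := k'.isLt; omega : k'.val ≤ 29)
      have hk0 : (0:ℝ) ≤ (k'.val:ℝ) := Nat.cast_nonneg _
      have ha29 : (a:ℝ) ≤ 29 := by exact_mod_cast ha
      have hm0 : (0:ℝ) ≤ (m'.val:ℝ) := Nat.cast_nonneg _
      have hk'le : (k'.val:ℝ) ≤ (a:ℝ) - 1 := by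
        by_contra hgt
        push_neg at hgt
        have e1 : fmax n y ((a:ℝ)-1) = Z k' * ((k'.val:ℝ) - ((a:ℝ)-1)) := by
          rw [hk', abs_sub_comm, abs_of_nonneg (by linarith)]
        have e2 : Z k' * ((k'.val:ℝ) - (m'.val:ℝ)) ≤ fmax n y ((m'.val:ℝ)) := by
          have h := hle k' ((m'.val:ℝ))
          rwa [abs_sub_comm, abs_of_nonneg (by linarith)] at h
        rw [← hμm'] at e2
        have hfb' : μ ≤ Z k' * ((k'.val:ℝ) - ((a:ℝ)-1)) := by rw [← e1]; exact hfb
        have hid : Z k' * (((a:ℝ)-1) - (m'.val:ℝ))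
            = Z k' * ((k'.val:ℝ) - (m'.val:ℝ)) - Z k' * ((k'.val:ℝ) - ((a:ℝ)-1)) := by ring
        have hq : Z k' * (((a:ℝ)-1) - (m'.val:ℝ)) ≤ 0 := by linarith
        have hd : (1:ℝ) ≤ ((a:ℝ)-1) - (m'.val:ℝ) := by linarith
        have h7 := mul_le_mul_of_nonneg_left hd (hZ0 k')
        have hZeq : Z k' = 0 := le_antisymm (by linarith) (hZ0 k')
        rw [hZeq, zero_mul] at e1
        linarith
      have e1 : fmax n y ((a:ℝ)-1) = Z k' * (((a:ℝ)-1) - (k'.val:ℝ)) := by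
        rw [hk', abs_of_nonneg (by linarith)]
      have hbound : fmax n y ((a:ℝ)-1) ≤ Z k' * 29 := by
        rw [e1]
        exact mul_le_mul_of_nonneg_left (by linarith) (hZ0 k')
      have hZbig : (53:ℝ)/870 ≤ Z k' := by linarith
      have e3 : Z k' * ((a:ℝ) - (k'.val:ℝ)) ≤ fmax n y (a:ℝ) := by
        have h := hle k' (a:ℝ)
        rwa [abs_of_nonneg (by linarith)] at h
      have hid : Z k' * ((a:ℝ) - (k'.val:ℝ))
          = Z k' * (((a:ℝ)-1) - (k'.val:ℝ)) + Z k' := by ring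
      constructor
      · show (1.8:ℝ) ≤ fmax n y (a:ℝ)
        linarith
      · show μ + 1/30 ≤ fmax n y (a:ℝ)
        linarith
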